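/- arXiv:2101.07621 — 9 statements merged into one kernel-verified Lean document; each statement's English description precedes it below -/
import Mathlib

section
/- Let M be an n×n matrix with entries in {0,1}, n ≥ 2, such that some column of M is the all-one vector. Then |det(M)| ≤ α_{n-1}, where α_{n-1} is the maximum of |det| over all (n-1)×(n-1) matrices with entries in {0,1}. -/
/-!
Subtracting the first row from the others turns the all-one column into a standard basis
vector, so expanding along it leaves the `(n-1)×(n-1)` matrix of differences
`M (p+1) q - M 0 q`. Negating the columns `q` with `M 0 q = 1` keeps `|det|` and turns those
entries into `1 - M (p+1) q`, giving a 0–1 matrix.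
-/

/-- A square real matrix has all entries in {0,1}. -/
def IsZeroOne {k : ℕ} (M : Matrix (Fin k) (Fin k) ℝ) : Prop :=
  ∀ i j, M i j = 0 ∨ M i j = 1

/-- `alpha k` is the maximum of `|det M|` over k×k 0–1 matrices. -/
noncomputable def alpha (k : ℕ) : ℝ :=
  sSup {x : ℝ | ∃ M : Matrix (Fin k) (Fin k) ℝ, IsZeroOne M ∧ x = |M.det|}

open Matrix

lemma IsZeroOne.abs_det_le_factorial {k : ℕ} {M : Matrix (Fin k) (Fin k) ℝ}
    (hM : IsZeroOne M) : |M.det| ≤ k.factorial := by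
  rw [det_apply]
  refine (Finset.abs_sum_le_sum_abs _ _).trans ?_
  calc ∑ σ : Equiv.Perm (Fin k), |(Equiv.Perm.sign σ : ℤ) • ∏ i, M (σ i) i|
      ≤ ∑ _σ : Equiv.Perm (Fin k), (1 : ℝ) := by
        refine Finset.sum_le_sum fun σ _ => ?_
        have hprod : |∏ i, M (σ i) i| ≤ 1 := by
          rw [Finset.abs_prod]
          exact Finset.prod_le_one (fun _ _ => abs_nonneg _) fun i _ => by
            rcases hM (σ i) i with h | h <;> simp [h]
        rcases Int.units_eq_one_or (Equiv.Perm.sign σ) with h | h <;> simpa [h] using hprod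
    _ = k.factorial := by simp [Fintype.card_perm]

lemma IsZeroOne.abs_det_le_alpha {k : ℕ} {M : Matrix (Fin k) (Fin k) ℝ} (hM : IsZeroOne M) :
    |M.det| ≤ alpha k :=
  le_csSup ⟨k.factorial, by rintro _ ⟨N, hN, rfl⟩; exact hN.abs_det_le_factorial⟩ ⟨M, hM, rfl⟩

namespace Matrix

theorem det_eq_of_column_eq_one {R : Type*} [CommRing R] {m : ℕ}
    (M : Matrix (Fin (m + 1)) (Fin (m + 1)) R) (j : Fin (m + 1)) (hcol : ∀ i, M i j = 1) :
    M.det = (-1) ^ (j : ℕ) *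
      (of fun p q => M p.succ (j.succAbove q) - M 0 (j.succAbove q)).det := by
  set A : Matrix (Fin (m + 1)) (Fin (m + 1)) R :=
    of fun i k => M i k + (if i = 0 then 0 else -1) * M 0 k
  have hdetA : A.det = M.det :=
    det_eq_of_forall_row_eq_smul_add_const _ 0 (by simp) fun _ _ => rfl
  have hAj : ∀ i, A i j = if i = 0 then 1 else 0 := fun i => by
    by_cases h : i = 0 <;> simp [A, h, hcol]
  rw [← hdetA, det_succ_column A j, Finset.sum_eq_single 0 (fun i _ hi => by simp [hAj i, hi])
    (by simp)]
  congr 1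
  · simp [hAj 0]
  · congr 1
    ext p q
    simp [A, Fin.succ_ne_zero, sub_eq_add_neg]

theorem abs_det_mul_diagonal {ι R : Type*} [Fintype ι] [DecidableEq ι] [CommRing R]
    [LinearOrder R] [IsStrictOrderedRing R] (B : Matrix ι ι R) {ε : ι → R} (hε : ∀ q, |ε q| = 1) :
    |(B * diagonal ε).det| = |B.det| := by
  simp [det_mul, abs_mul, Finset.abs_prod, hε]

end Matrix

lemma sub_mul_one_sub_two_mul_eq_zero_or_one {R : Type*} [Ring R] {a b : R} (ha : a = 0 ∨ a = 1) (hb : b = 0 ∨ b = 1) :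
    (a - b) * (1 - 2 * b) = 0 ∨ (a - b) * (1 - 2 * b) = 1 := by
  rcases ha with rfl | rfl <;> rcases hb with rfl | rfl <;> norm_num

theorem stmt_0_general {n : ℕ} (M : Matrix (Fin n) (Fin n) ℝ)
    (hM : IsZeroOne M) (j : Fin n) (hcol : ∀ i, M i j = 1) :
    |M.det| ≤ alpha (n - 1) := by
  obtain ⟨m, rfl⟩ : ∃ m, n = m + 1 := Nat.exists_eq_add_one.mpr j.pos
  set B : Matrix (Fin m) (Fin m) ℝ :=
    of fun p q => M p.succ (j.succAbove q) - M 0 (j.succAbove q)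
  set ε : Fin m → ℝ := fun q => 1 - 2 * M 0 (j.succAbove q)
  have hε : ∀ q, |ε q| = 1 := fun q => by
    rcases hM 0 (j.succAbove q) with h | h <;> norm_num [ε, h]
  have hC : IsZeroOne (B * diagonal ε) := fun p q => by
    simpa [B, ε] using sub_mul_one_sub_two_mul_eq_zero_or_one (hM p.succ (j.succAbove q))
      (hM 0 (j.succAbove q))
  calc |M.det| = |B.det| := by
        rw [det_eq_of_column_eq_one M j hcol, abs_mul, abs_pow, abs_neg, abs_one, one_pow,
          one_mul]
    _ = |(B * diagonal ε).det| := (abs_det_mul_diagonal B hε).symm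
    _ ≤ alpha (m + 1 - 1) := hC.abs_det_le_alpha

theorem stmt_0 {n : ℕ} (hn : 2 ≤ n) (M : Matrix (Fin n) (Fin n) ℝ)
    (hM : IsZeroOne M) (j : Fin n) (hcol : ∀ i, M i j = 1) :
    |M.det| ≤ alpha (n - 1) :=
  stmt_0_general M hM j hcol
end

section
/- Every weighted simple game has an integer-weight representation: if there exist w ∈ ℝ^N and q ∈ ℝ with S ∈ W ⟺ Σ_{i∈S} w_i ≥ q for all S ⊆ N, then there exist integer w' ∈ ℤ^N and q' ∈ ℤ with the same property. -/
/-! Since there are only finitely many coalitions, the losing ones fall short of the quota `q`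
by at least some `ε > 0`. Scaling by `M = (n + 1) / ε` and rounding every weight down loses at
most `n` on any coalition, while the losing coalitions now fall short by at least `n + 1`, so the
integer quota `⌊M q⌋ - n` still separates winning from losing coalitions. -/

open Finset

/-- A simple game with player set `Fin n`, given by its set `W` of winning
coalitions, is weighted. -/
def IsWeighted {n : ℕ} (W : Set (Finset (Fin n))) : Prop :=
  ∃ (w : Fin n → ℝ) (q : ℝ), ∀ S : Finset (Fin n), S ∈ W ↔ q ≤ ∑ i ∈ S, w i

/-- `(X; Y)` is a trading transform: every player occurs equally often
among the `X`'s and among the `Y`'s. -/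
def IsTradingTransform {n j : ℕ} (X Y : Fin j → Finset (Fin n)) : Prop :=
  ∀ p : Fin n,
    (Finset.univ.filter fun i => p ∈ X i).card =
    (Finset.univ.filter fun i => p ∈ Y i).card

/-- The game `W` is `k`-trade robust (for a real bound `k`): there is no trading
transform of size `j` with `1 ≤ j ≤ k` turning winning coalitions into losing ones. -/
def TradeRobustUpTo {n : ℕ} (W : Set (Finset (Fin n))) (k : ℝ) : Prop :=
  ¬ ∃ (j : ℕ) (X Y : Fin j → Finset (Fin n)),
      1 ≤ j ∧ (j : ℝ) ≤ k ∧ IsTradingTransform X Y ∧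
      (∀ i, X i ∈ W) ∧ (∀ i, Y i ∉ W)

lemma Finite.exists_pos_add_le_of_lt {α : Type*} [Finite α] (f : α → ℝ) (q : ℝ) :
    ∃ ε > 0, ∀ a, f a < q → f a + ε ≤ q := by
  rcases isEmpty_or_nonempty α with _ | _
  · exact ⟨1, one_pos, fun a => isEmptyElim a⟩
  let gap a := if f a < q then q - f a else 1
  have gap_pos a : 0 < gap a := by
    unfold gap
    split_ifs <;> linarith
  obtain ⟨a₀, ha₀⟩ := Finite.exists_min gap
  refine ⟨gap a₀, gap_pos a₀, fun a ha => ?_⟩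
  have := ha₀ a
  simp only [gap, if_pos ha] at this
  linarith

namespace Finset

variable {ι : Type*}

lemma sum_intFloor_le (s : Finset ι) (f : ι → ℝ) :
    ((∑ i ∈ s, ⌊f i⌋ : ℤ) : ℝ) ≤ ∑ i ∈ s, f i := by
  push_cast
  exact sum_le_sum fun i _ => Int.floor_le (f i)

lemma sum_sub_card_le_sum_intFloor (s : Finset ι) (f : ι → ℝ) :
    ∑ i ∈ s, f i - s.card ≤ ((∑ i ∈ s, ⌊f i⌋ : ℤ) : ℝ) := by
  push_cast
  rw [sub_le_iff_le_add, card_eq_sum_ones, Nat.cast_sum, Nat.cast_one, ← sum_add_distrib]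
  exact sum_le_sum fun i _ => by linarith [Int.lt_floor_add_one (f i)]

end Finset

theorem exists_int_threshold_of_real_threshold {ι : Type*} [Fintype ι] (w : ι → ℝ) (q : ℝ) :
    ∃ (w' : ι → ℤ) (q' : ℤ), ∀ S : Finset ι, q ≤ ∑ i ∈ S, w i ↔ q' ≤ ∑ i ∈ S, w' i := by
  obtain ⟨ε, hε, hgap⟩ := Finite.exists_pos_add_le_of_lt (fun S : Finset ι => ∑ i ∈ S, w i) q
  set n := Fintype.card ι
  set M := (n + 1) / ε
  have hM : 0 ≤ M := by positivity
  have hMε : M * ε = n + 1 := div_mul_cancel₀ _ hε.ne'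
  refine ⟨fun i => ⌊M * w i⌋, ⌊M * q⌋ - n, fun S => ?_⟩
  have hcard : (S.card : ℝ) ≤ n := by exact_mod_cast S.card_le_univ
  rw [← Int.cast_le (R := ℝ), Int.cast_sub, Int.cast_natCast]
  constructor
  · intro hwin
    calc (⌊M * q⌋ : ℝ) - n ≤ M * q - S.card := by linarith [Int.floor_le (M * q)]
      _ ≤ ∑ i ∈ S, M * w i - S.card := by
          rw [← mul_sum]; gcongr
      _ ≤ _ := sum_sub_card_le_sum_intFloor S _
  · intro hquota
    by_contra hlose
    have hshort := hgap S (not_le.mp hlose)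
    have hbelow : ((∑ i ∈ S, ⌊M * w i⌋ : ℤ) : ℝ) < ⌊M * q⌋ - n :=
      calc ((∑ i ∈ S, ⌊M * w i⌋ : ℤ) : ℝ) ≤ M * ∑ i ∈ S, w i := by
            rw [mul_sum]; exact sum_intFloor_le S _
        _ ≤ M * (q - ε) := by gcongr; linarith
        _ < ⌊M * q⌋ - n := by linarith [Int.lt_floor_add_one (M * q)]
    exact hquota.not_gt hbelow

theorem stmt_9 {n : ℕ} (W : Set (Finset (Fin n))) (hweighted : IsWeighted W) :
    ∃ (w : Fin n → ℤ) (q : ℤ),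
      ∀ S : Finset (Fin n), S ∈ W ↔ q ≤ ∑ i ∈ S, w i := by
  obtain ⟨w, q, hW⟩ := hweighted
  obtain ⟨w', q', hint⟩ := exists_int_threshold_of_real_threshold w q
  exact ⟨w', q', fun S => (hW S).trans (hint S)⟩
end

section
/- Let (q*; w*) be a real solution of the system: Σ_{i∈S} w*_i ≥ q* for all minimal winning coalitions S, Σ_{i∈S} w*_i ≤ q* - 1 for all maximal losing coalitions S, q* ≥ 1, and w*_i ≥ 1 for all i. Then for any real λ > 0 such that λ > Σ_{i∈N}(λ w*_i - ⌊λ w*_i⌋), the integer vector W = ⌊λ w*⌋ (componentwise floor) together with Q = ⌊λ(q*-1)⌋ + 1 satisfies Σ_{i∈S} W_i ≥ Q for every minimal winning coalition S and Σ_{i∈S} W_i ≤ Q - 1 for every maximal losing coalition S. -/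
/-!
Scaling the inequalities by `λ` and rounding each weight down loses at most the total fractional
part `∑ i, (λ wᵢ - ⌊λ wᵢ⌋) < λ`. So a winning coalition keeps total integer weight
`> λ q - λ = λ (q - 1)`, hence at least `⌊λ (q - 1)⌋ + 1`, while rounding down can only make a
losing coalition lighter, so it stays at most `⌊λ (q - 1)⌋`.
-/

open Finset

section FloorSums

variable {ι R : Type*} [CommRing R] [LinearOrder R] [IsStrictOrderedRing R] [FloorRing R]

theorem sum_floor_le_floor_of_sum_le {S : Finset ι} {f : ι → R} {x : R}
    (h : ∑ i ∈ S, f i ≤ x) : ∑ i ∈ S, ⌊f i⌋ ≤ ⌊x⌋ :=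
  Int.le_floor.mpr <| by
    push_cast
    exact (sum_le_sum fun i _ => Int.floor_le (f i)).trans h

theorem sub_lt_sum_floor_of_sum_fract_lt [Fintype ι] {S : Finset ι} {f : ι → R} {x δ : R}
    (hx : x ≤ ∑ i ∈ S, f i) (hδ : ∑ i, Int.fract (f i) < δ) :
    x - δ < ∑ i ∈ S, ⌊f i⌋ := by
  have hfract : ∑ i ∈ S, Int.fract (f i) ≤ ∑ i, Int.fract (f i) :=
    sum_le_sum_of_subset_of_nonneg S.subset_univ fun i _ _ => Int.fract_nonneg (f i)
  have hsplit : ∑ i ∈ S, f i = ∑ i ∈ S, (⌊f i⌋ : R) + ∑ i ∈ S, Int.fract (f i) := by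
    rw [← sum_add_distrib]
    exact sum_congr rfl fun i _ => (Int.floor_add_fract (f i)).symm
  push_cast
  linarith

theorem floor_sub_one_lt_sum_floor_mul [Fintype ι] {S : Finset ι} {w : ι → R} {q lam : R}
    (hlam : 0 ≤ lam) (hq : q ≤ ∑ i ∈ S, w i) (hfrac : ∑ i, Int.fract (lam * w i) < lam) :
    ⌊lam * (q - 1)⌋ < ∑ i ∈ S, ⌊lam * w i⌋ := by
  refine Int.floor_lt.mpr ?_
  rw [mul_sub_one]
  refine sub_lt_sum_floor_of_sum_fract_lt ?_ hfrac
  rw [← mul_sum]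
  exact mul_le_mul_of_nonneg_left hq hlam

theorem sum_floor_mul_le_floor_mul {S : Finset ι} {w : ι → R} {x lam : R}
    (hlam : 0 ≤ lam) (hx : ∑ i ∈ S, w i ≤ x) :
    ∑ i ∈ S, ⌊lam * w i⌋ ≤ ⌊lam * x⌋ :=
  sum_floor_le_floor_of_sum_le <| by
    rw [← mul_sum]
    exact mul_le_mul_of_nonneg_left hx hlam

end FloorSums

theorem stmt_10_general {n : ℕ} (Wmin Lmax : Set (Finset (Fin n)))
    (w : Fin n → ℝ) (q : ℝ)
    (hWin : ∀ S ∈ Wmin, q ≤ ∑ i ∈ S, w i)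
    (hLose : ∀ S ∈ Lmax, ∑ i ∈ S, w i ≤ q - 1)
    (lam : ℝ) (hlam : 0 < lam)
    (hfrac : ∑ i : Fin n, (lam * w i - ⌊lam * w i⌋) < lam) :
    (∀ S ∈ Wmin, ⌊lam * (q - 1)⌋ + 1 ≤ ∑ i ∈ S, ⌊lam * w i⌋) ∧
    (∀ S ∈ Lmax, ∑ i ∈ S, ⌊lam * w i⌋ ≤ (⌊lam * (q - 1)⌋ + 1) - 1) := by
  simp only [Int.self_sub_floor] at hfrac
  refine ⟨fun S hS => ?_, fun S hS => ?_⟩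
  · exact Order.add_one_le_of_lt (floor_sub_one_lt_sum_floor_mul hlam.le (hWin S hS) hfrac)
  · rw [add_sub_cancel_right]
    exact sum_floor_mul_le_floor_mul hlam.le (hLose S hS)

theorem stmt_10 {n : ℕ} (Wmin Lmax : Set (Finset (Fin n)))
    (w : Fin n → ℝ) (q : ℝ)
    (hq : 1 ≤ q) (hw : ∀ i, 1 ≤ w i)
    (hWin : ∀ S ∈ Wmin, q ≤ ∑ i ∈ S, w i)
    (hLose : ∀ S ∈ Lmax, ∑ i ∈ S, w i ≤ q - 1)
    (lam : ℝ) (hlam : 0 < lam)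
    (hfrac : ∑ i : Fin n, (lam * w i - ⌊lam * w i⌋) < lam) :
    (∀ S ∈ Wmin, ⌊lam * (q - 1)⌋ + 1 ≤ ∑ i ∈ S, ⌊lam * w i⌋) ∧
    (∀ S ∈ Lmax, ∑ i ∈ S, ⌊lam * w i⌋ ≤ (⌊lam * (q - 1)⌋ + 1) - 1) :=
  stmt_10_general Wmin Lmax w q hWin hLose lam hlam hfrac
end

section
/- Define g(λ) = λ - Σ_{i∈N}(λ w*_i - ⌊λ w*_i⌋) for fixed reals w*_i ≥ 1 (i ∈ N, |N| = n ≥ 1). If Λ is uniformly distributed on [ℓ₁, u₁] with ℓ₁ = (2-√2)n - (√2-1) and u₁ = (2-√2)n + (√2-1), then E[g(Λ)] ≥ 0. -/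
open MeasureTheory Set

noncomputable def Fr (x : ℝ) : ℝ := x/2 + Int.fract x * (Int.fract x - 1)/2

lemma Fr_cont : Continuous Fr := by
  have h1 : Continuous ((fun y : ℝ => y * (y - 1)) ∘ Int.fract) :=
    ContinuousOn.comp_fract'' (by fun_prop) (by norm_num)
  have h1' : Continuous fun x : ℝ => Int.fract x * (Int.fract x - 1) := h1
  exact (continuous_id.div_const 2).add (h1'.div_const 2)

lemma fract_ii (a b : ℝ) : IntervalIntegrable Int.fract volume a b := by
  have h1 : IntervalIntegrable (fun x : ℝ => x) volume a b :=
    intervalIntegral.intervalIntegrable_id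
  have h2 : IntervalIntegrable (fun x : ℝ => ((⌊x⌋ : ℤ) : ℝ)) volume a b :=
    Monotone.intervalIntegrable (fun x y hxy => by exact_mod_cast Int.floor_le_floor hxy)
  simpa [Int.self_sub_floor] using h1.sub h2

lemma Fr_deriv (x : ℝ) : HasDerivWithinAt Fr (Int.fract x) (Ioi x) x := by
  set m : ℤ := ⌊x⌋ with hm
  have hfr : Int.fract x = x - m := (Int.self_sub_floor x).symm
  have hg : HasDerivAt (fun y : ℝ => y/2 + (y - m) * ((y - m) - 1)/2) (Int.fract x) x := by
    have h : HasDerivAt (fun y : ℝ => y/2 + (y - m) * ((y - m) - 1)/2)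
        (1/2 + ((1 : ℝ) * ((x - m) - 1) + (x - m) * 1)/2) x := by
      exact ((hasDerivAt_id x).div_const 2).add
        ((((hasDerivAt_id x).sub_const (m : ℝ)).mul
          (((hasDerivAt_id x).sub_const (m : ℝ)).sub_const 1)).div_const 2)
    convert h using 1
    rw [hfr]; ring
  refine hg.hasDerivWithinAt.congr_of_eventuallyEq ?_ ?_
  · filter_upwards [Ioo_mem_nhdsGT_of_mem
      (⟨le_refl x, Int.lt_floor_add_one x⟩ : x ∈ Ico x ((m : ℝ) + 1))] with y hy
    have hy1 : (m : ℝ) ≤ y := le_trans (Int.floor_le x) hy.1.le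
    have hfl : ⌊y⌋ = m := Int.floor_eq_iff.2 ⟨hy1, hy.2⟩
    have : Int.fract y = y - m := by rw [← hfl]; exact (Int.self_sub_floor y).symm
    simp only [Fr, this]
  · simp only [Fr, hfr]

lemma Fr_integral {a b : ℝ} (hab : a ≤ b) :
    ∫ y in a..b, Int.fract y = Fr b - Fr a :=
  intervalIntegral.integral_eq_sub_of_hasDeriv_right_of_le hab Fr_cont.continuousOn
    (fun x _ => Fr_deriv x) (fract_ii a b)

lemma Fr_key {a b : ℝ} (h : 2*(Real.sqrt 2 - 1) ≤ b - a) :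
    Fr b - Fr a ≤ (2 - Real.sqrt 2) * (b - a) := by
  set s := Real.sqrt 2 with hsdef
  have hs2 : s^2 = 2 := Real.sq_sqrt (by norm_num)
  have hs0 : 0 ≤ s := Real.sqrt_nonneg 2
  have hsl : 1 < s := by nlinarith
  have hsu : s ≤ 3/2 := by nlinarith
  set fa := Int.fract a with hfadef
  set fb := Int.fract b with hfbdef
  have hfa0 : 0 ≤ fa := Int.fract_nonneg a
  have hfa1 : fa < 1 := Int.fract_lt_one a
  have hfb0 : 0 ≤ fb := Int.fract_nonneg b
  have hfb1 : fb < 1 := Int.fract_lt_one b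
  have ha : fa = a - ⌊a⌋ := (Int.self_sub_floor a).symm
  have hb : fb = b - ⌊b⌋ := (Int.self_sub_floor b).symm
  set k : ℤ := ⌊b⌋ - ⌊a⌋ with hk
  have hbk : b - a = (k : ℝ) + fb - fa := by
    have : ((k : ℤ) : ℝ) = (⌊b⌋ : ℝ) - (⌊a⌋ : ℝ) := by push_cast [hk]; ring
    rw [this]; rw [ha, hb]; ring
  have hFr : Fr b - Fr a = (b-a)/2 + (fb*(fb-1) - fa*(fa-1))/2 := by
    simp only [Fr]; ring
  have hk0 : 0 ≤ k := by
    by_contra hneg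
    push_neg at hneg
    have hk1 : k ≤ -1 := by omega
    have : (k : ℝ) ≤ -1 := by exact_mod_cast hk1
    nlinarith
  rw [hFr, hbk]
  rw [hbk] at h
  rcases lt_or_ge k 2 with h2 | h2
  · interval_cases k
    · push_cast at h ⊢
      nlinarith [mul_nonneg (show (0:ℝ) ≤ fb - fa by linarith)
        (show (0:ℝ) ≤ 4 - 2*s - fa - fb by linarith)]
    · push_cast at h ⊢
      rcases le_total fa fb with hB | hB
      · nlinarith [sq_nonneg (fa - fb + s - 1),
          mul_nonneg (show (0:ℝ) ≤ fb - fa by linarith)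
            (show (0:ℝ) ≤ 1 - fb by linarith)]
      · nlinarith [mul_nonneg (show (0:ℝ) ≤ 3 - 2*s - (fa - fb) by linarith)
          (show (0:ℝ) ≤ 1 - (fa - fb) by linarith),
          mul_nonneg hfb0 (show (0:ℝ) ≤ fa - fb by linarith)]
  · have hk2 : (2 : ℝ) ≤ (k : ℝ) := by exact_mod_cast h2
    nlinarith [sq_nonneg (fa - 2 + s),
      mul_nonneg hfb0 (show (0:ℝ) ≤ 4 - 2*s - fb by linarith),
      mul_nonneg (show (0:ℝ) ≤ 3 - 2*s by linarith) (show (0:ℝ) ≤ (k:ℝ) - 2 by linarith)]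

set_option maxHeartbeats 1000000 in
theorem stmt_12 {n : ℕ} (hn : 1 ≤ n) (w : Fin n → ℝ) (hw : ∀ i, 1 ≤ w i) :
    0 ≤ (((2 - Real.sqrt 2) * n + (Real.sqrt 2 - 1)) -
          ((2 - Real.sqrt 2) * n - (Real.sqrt 2 - 1)))⁻¹ *
        ∫ lam in ((2 - Real.sqrt 2) * n - (Real.sqrt 2 - 1))..
                  ((2 - Real.sqrt 2) * n + (Real.sqrt 2 - 1)),
          (lam - ∑ i : Fin n, Int.fract (lam * w i)) := by
  set s := Real.sqrt 2 with hsdef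
  have hs2 : s^2 = 2 := Real.sq_sqrt (by norm_num)
  have hs0 : 0 ≤ s := Real.sqrt_nonneg 2
  have hsl : 1 < s := by nlinarith
  have hsu : s ≤ 3/2 := by nlinarith
  set l : ℝ := (2 - s) * n - (s - 1) with hl
  set u : ℝ := (2 - s) * n + (s - 1) with hu
  have hul : u - l = 2 * (s - 1) := by rw [hl, hu]; ring
  have hlu : l ≤ u := by rw [hl, hu]; nlinarith
  have hwpos : ∀ i, (0:ℝ) < w i := fun i => lt_of_lt_of_le one_pos (hw i)
  -- integrability of each fract term
  have hii : ∀ i : Fin n, IntervalIntegrable (fun lam => Int.fract (lam * w i)) volume l u := by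
    intro i
    have h1 : IntervalIntegrable (fun lam : ℝ => lam * w i) volume l u :=
      (continuous_id.mul continuous_const).intervalIntegrable _ _
    have h2 : IntervalIntegrable (fun lam : ℝ => ((⌊lam * w i⌋ : ℤ) : ℝ)) volume l u :=
      Monotone.intervalIntegrable (fun x y hxy => by
        exact_mod_cast Int.floor_le_floor (mul_le_mul_of_nonneg_right hxy (hwpos i).le))
    simpa [Int.self_sub_floor] using h1.sub h2
  have hsum_ii : IntervalIntegrable (fun lam => ∑ i : Fin n, Int.fract (lam * w i)) volume l u := by
    have := IntervalIntegrable.sum (f := fun (i : Fin n) (lam : ℝ) => Int.fract (lam * w i))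
      Finset.univ (fun i _ => hii i)
    simpa [Finset.sum_fn] using this
  have hid : IntervalIntegrable (fun lam : ℝ => lam) volume l u :=
    intervalIntegral.intervalIntegrable_id
  -- split the integral
  have hsplit : (∫ lam in l..u, (lam - ∑ i : Fin n, Int.fract (lam * w i)))
      = (∫ lam in l..u, lam) - ∑ i : Fin n, ∫ lam in l..u, Int.fract (lam * w i) := by
    rw [intervalIntegral.integral_sub hid hsum_ii,
      intervalIntegral.integral_finset_sum (μ := volume) (f := fun (i : Fin n) (lam : ℝ) => Int.fract (lam * w i)) (fun i _ => hii i)]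
  -- evaluate each fract integral
  have hper : ∀ i : Fin n, (∫ lam in l..u, Int.fract (lam * w i))
      ≤ (2 - s) * (u - l) := by
    intro i
    have hw0 : w i ≠ 0 := (hwpos i).ne'
    have hcomp : (∫ lam in l..u, Int.fract (lam * w i))
        = (w i)⁻¹ • ∫ x in l * w i..u * w i, Int.fract x :=
      intervalIntegral.integral_comp_mul_right Int.fract hw0
    have hab : l * w i ≤ u * w i := mul_le_mul_of_nonneg_right hlu (hwpos i).le
    have hlen : 2 * (s - 1) ≤ u * w i - l * w i := by
      have : u * w i - l * w i = (u - l) * w i := by ring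
      rw [this, hul]
      nlinarith [hw i]
    have hF := Fr_integral hab
    have hkey := Fr_key hlen
    rw [hcomp, hF, smul_eq_mul]
    have h1 : (w i)⁻¹ * (Fr (u * w i) - Fr (l * w i))
        ≤ (w i)⁻¹ * ((2 - s) * (u * w i - l * w i)) := by
      apply mul_le_mul_of_nonneg_left hkey (inv_nonneg.2 (hwpos i).le)
    calc (w i)⁻¹ * (Fr (u * w i) - Fr (l * w i))
        ≤ (w i)⁻¹ * ((2 - s) * (u * w i - l * w i)) := h1
      _ = (2 - s) * (u - l) := by field_simp
  have hidval : (∫ lam in l..u, lam) = (u^2 - l^2)/2 := integral_id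
  have hX : 0 ≤ (∫ lam in l..u, (lam - ∑ i : Fin n, Int.fract (lam * w i))) := by
    rw [hsplit, hidval]
    have hsum : (∑ i : Fin n, ∫ lam in l..u, Int.fract (lam * w i))
        ≤ ∑ _i : Fin n, (2 - s) * (u - l) :=
      Finset.sum_le_sum (fun i _ => hper i)
    have hcard : (∑ _i : Fin n, (2 - s) * (u - l)) = n * ((2 - s) * (u - l)) := by
      rw [Finset.sum_const, Finset.card_univ, Fintype.card_fin]; ring
    have hval : (u^2 - l^2)/2 = n * ((2 - s) * (u - l)) := by
      rw [hl, hu]; ring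
    have hle : (∑ i : Fin n, ∫ lam in l..u, Int.fract (lam * w i)) ≤ (u^2 - l^2)/2 := by
      rw [hval]; exact le_of_le_of_eq hsum hcard
    linarith
  have hpos : 0 < (u - l)⁻¹ := inv_pos.2 (by rw [hul]; linarith)
  calc (0:ℝ) = (u - l)⁻¹ * 0 := by ring
    _ ≤ (u - l)⁻¹ * _ := mul_le_mul_of_nonneg_left hX hpos.le
end

section
/- For the function f(x) = (1/x)·∫_{-x}^{0} (μ - ⌊μ⌋) dμ defined for x > 0, if x ≥ 2(√2 - 1) then f(x) ≤ 2 - √2. -/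
open MeasureTheory

lemma fract_intervalIntegrable (a b : ℝ) :
    IntervalIntegrable (fun μ : ℝ => Int.fract μ) volume a b := by
  apply IntervalIntegrable.mono_fun' (g := fun _ => (1 : ℝ)) intervalIntegrable_const
  · exact measurable_fract.aestronglyMeasurable.restrict
  · filter_upwards with μ
    simp only [Real.norm_eq_abs, abs_of_nonneg (Int.fract_nonneg μ)]
    exact (Int.fract_lt_one μ).le

lemma fract_integral_01 : ∫ μ in (0:ℝ)..1, Int.fract μ = 1 / 2 := by
  have hae : ∀ᵐ μ : ℝ, μ ∈ Set.uIoc (0:ℝ) 1 → Int.fract μ = μ := by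
    have h1 : (volume : Measure ℝ) {(1:ℝ)} = 0 := measure_singleton 1
    filter_upwards [compl_mem_ae_iff.2 h1] with μ hμ hmem
    rw [Set.uIoc_of_le (by norm_num : (0:ℝ) ≤ 1)] at hmem
    have hne : μ ≠ 1 := hμ
    exact Int.fract_eq_self.2 ⟨hmem.1.le, lt_of_le_of_ne hmem.2 hne⟩
  rw [intervalIntegral.integral_congr_ae hae, integral_id]
  norm_num

lemma fract_integral_int (n : ℕ) : ∫ μ in (-(n:ℝ))..0, Int.fract μ = n / 2 := by
  have key := (Int.fract_periodic ℝ).intervalIntegral_add_zsmul_eq (n : ℤ) (-(n:ℝ))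
    fract_intervalIntegrable
  have h0 : -(n:ℝ) + (n:ℤ) • (1:ℝ) = 0 := by rw [zsmul_eq_mul]; push_cast; ring
  rw [h0] at key
  have h1 : ∫ μ in (-(n:ℝ))..(-(n:ℝ) + 1), Int.fract μ = ∫ μ in (0:ℝ)..(0+1), Int.fract μ :=
    (Int.fract_periodic ℝ).intervalIntegral_add_eq _ 0
  rw [h1] at key
  rw [key]
  rw [show (0:ℝ) + 1 = 1 by ring, fract_integral_01, zsmul_eq_mul]
  push_cast
  ring

theorem stmt_13 (x : ℝ) (hx : 2 * (Real.sqrt 2 - 1) ≤ x) :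
    (1 / x) * ∫ μ in (-x)..(0 : ℝ), (μ - ⌊μ⌋) ≤ 2 - Real.sqrt 2 := by
  have hs2 : Real.sqrt 2 ^ 2 = 2 := Real.sq_sqrt (by norm_num)
  have hs1 : 1 < Real.sqrt 2 := by nlinarith [Real.sqrt_nonneg 2]
  have hs15 : Real.sqrt 2 < 3 / 2 := by nlinarith [Real.sqrt_nonneg 2]
  have hx0 : 0 < x := by nlinarith
  set n : ℤ := ⌊x⌋ with hn
  set t : ℝ := Int.fract x with ht
  have hxnt : x = (n : ℝ) + t := by rw [ht, hn]; exact (Int.floor_add_fract x).symm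
  have hn0 : 0 ≤ n := Int.floor_nonneg.2 hx0.le
  have ht0 : 0 ≤ t := Int.fract_nonneg x
  have ht1 : t < 1 := Int.fract_lt_one x
  -- rewrite integrand as Int.fract
  have hint : (∫ μ in (-x)..(0 : ℝ), (μ - ⌊μ⌋)) = ∫ μ in (-x)..(0:ℝ), Int.fract μ := by
    apply intervalIntegral.integral_congr
    intro μ _
    exact Int.self_sub_floor μ
  -- value of the middle piece
  have hmn : -x ≤ -(n:ℝ) := by
    have : (n:ℝ) ≤ x := Int.floor_le x
    linarith
  have hpiece : ∫ μ in (-x)..(-(n:ℝ)), Int.fract μ = t - t ^ 2 / 2 := by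
    have hae : ∀ᵐ μ : ℝ, μ ∈ Set.uIoc (-x) (-(n:ℝ)) → Int.fract μ = μ + (n + 1 : ℝ) := by
      have h1 : (volume : Measure ℝ) {(-(n:ℝ))} = 0 := measure_singleton _
      filter_upwards [compl_mem_ae_iff.2 h1] with μ hμ hmem
      rw [Set.uIoc_of_le hmn] at hmem
      have hne : μ ≠ -(n:ℝ) := hμ
      have hlt : μ < -(n:ℝ) := lt_of_le_of_ne hmem.2 hne
      have hgt : -((n:ℝ) + 1) ≤ μ := by
        have : x < (n:ℝ) + 1 := by rw [hxnt]; linarith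
        linarith [hmem.1]
      have hfl : ⌊μ⌋ = -(n + 1) := by
        rw [Int.floor_eq_iff]
        constructor
        · push_cast; linarith
        · push_cast; linarith
      rw [Int.fract, hfl]
      push_cast
      ring
    rw [intervalIntegral.integral_congr_ae hae]
    have : ∫ μ in (-x)..(-(n:ℝ)), (μ + ((n:ℝ) + 1)) =
        (∫ μ in (-x)..(-(n:ℝ)), μ) + ∫ _ in (-x)..(-(n:ℝ)), ((n:ℝ) + 1) := by
      apply intervalIntegral.integral_add
      · exact (intervalIntegral.intervalIntegrable_id)
      · exact intervalIntegrable_const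
    rw [this, integral_id, intervalIntegral.integral_const, smul_eq_mul, hxnt]
    ring
  -- total integral
  have hnn : ∃ m : ℕ, (n : ℤ) = (m : ℤ) := ⟨n.toNat, (Int.toNat_of_nonneg hn0).symm⟩
  obtain ⟨m, hm⟩ := hnn
  have htail : ∫ μ in (-(n:ℝ))..0, Int.fract μ = (n : ℝ) / 2 := by
    have := fract_integral_int m
    rw [show ((m:ℝ)) = ((n:ℝ)) by exact_mod_cast congrArg (fun z : ℤ => (z:ℝ)) hm.symm] at this
    exact this
  have htotal : ∫ μ in (-x)..(0:ℝ), Int.fract μ = t - t ^ 2 / 2 + (n : ℝ) / 2 := by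
    rw [← intervalIntegral.integral_add_adjacent_intervals
      (fract_intervalIntegrable (-x) (-(n:ℝ))) (fract_intervalIntegrable (-(n:ℝ)) 0),
      hpiece, htail]
  rw [hint, htotal]
  -- final inequality
  rw [div_mul_eq_mul_div, one_mul, div_le_iff₀ hx0]
  have hncase : n = 0 ∨ (1:ℝ) ≤ (n:ℝ) := by
    rcases eq_or_lt_of_le hn0 with h | h
    · left; omega
    · right; exact_mod_cast h
  rcases hncase with h | h
  · have hxt : x = t := by rw [hxnt, h]; push_cast; ring
    rw [hxnt, h]
    push_cast
    have : 2 * (Real.sqrt 2 - 1) ≤ t := by rw [hxt] at hx; exact hx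
    nlinarith
  · rw [hxnt]
    nlinarith [sq_nonneg (t - Real.sqrt 2 + 1)]
end

section
/- Given a feasible solution (q*; w*) of the relaxed system (Σ_{i∈S} w*_i ≥ q* for minimal winning S, ≤ q*-1 for maximal losing S, q* ≥ 1, w*_i ≥ 1), the scaled rounding w' = ⌊n·w*⌋, q' = ⌊n(q*-1)⌋ + 1 is an integer solution: Σ_{i∈S} w'_i ≥ q' for every minimal winning coalition S and Σ_{i∈S} w'_i ≤ q' - 1 for every maximal losing coalition S. -/
open Finset

section FloorSum

variable {ι α : Type*} [Field α] [LinearOrder α] [IsStrictOrderedRing α] [FloorRing α]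

theorem Finset.sum_floor_le_sum (s : Finset ι) (x : ι → α) :
    ((∑ i ∈ s, ⌊x i⌋ : ℤ) : α) ≤ ∑ i ∈ s, x i := by
  push_cast
  exact sum_le_sum fun i _ => Int.floor_le (x i)

theorem Finset.sum_sub_card_lt_sum_floor {s : Finset ι} (hs : s.Nonempty) (x : ι → α) :
    ∑ i ∈ s, x i - #s < ((∑ i ∈ s, ⌊x i⌋ : ℤ) : α) := by
  have hlt : ∑ i ∈ s, (x i - 1) < ∑ i ∈ s, (⌊x i⌋ : α) :=
    sum_lt_sum_of_nonempty hs fun i _ => Int.sub_one_lt_floor (x i)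
  simpa [sum_sub_distrib] using hlt

end FloorSum

section ScaledRounding

variable {ι : Type*} {s : Finset ι} {w : ι → ℝ} {t r q : ℝ}

theorem sum_floor_mul_le_floor_mul_s14 (ht : 0 ≤ t) (hlose : ∑ i ∈ s, w i ≤ r) :
    ∑ i ∈ s, ⌊t * w i⌋ ≤ ⌊t * r⌋ := by
  refine Int.le_floor.mpr ?_
  calc ((∑ i ∈ s, ⌊t * w i⌋ : ℤ) : ℝ) ≤ ∑ i ∈ s, t * w i := sum_floor_le_sum s _
    _ = t * ∑ i ∈ s, w i := (mul_sum s w t).symm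
    _ ≤ t * r := mul_le_mul_of_nonneg_left hlose ht

/-- Rounding down loses less than `1` per member of `s`, and `#s ≤ t` of these losses are
absorbed by lowering the quota from `t * q` to `t * (q - 1)`. -/
theorem floor_mul_sub_one_lt_sum_floor_mul (hs : s.Nonempty) (hcard : (#s : ℝ) ≤ t)
    (hwin : q ≤ ∑ i ∈ s, w i) : ⌊t * (q - 1)⌋ < ∑ i ∈ s, ⌊t * w i⌋ := by
  have ht : 0 ≤ t := (Nat.cast_nonneg _).trans hcard
  refine Int.floor_lt.mpr ?_
  calc t * (q - 1) = t * q - t := by ring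
    _ ≤ t * ∑ i ∈ s, w i - #s := by gcongr
    _ = ∑ i ∈ s, t * w i - #s := by rw [mul_sum]
    _ < ((∑ i ∈ s, ⌊t * w i⌋ : ℤ) : ℝ) := sum_sub_card_lt_sum_floor hs _

end ScaledRounding

theorem stmt_14_general {n : ℕ} (Wmin Lmax : Set (Finset (Fin n)))
    (w : Fin n → ℝ) (q : ℝ)
    (hq : 1 ≤ q)
    (hWin : ∀ S ∈ Wmin, q ≤ ∑ i ∈ S, w i)
    (hLose : ∀ S ∈ Lmax, ∑ i ∈ S, w i ≤ q - 1) :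
    (∀ S ∈ Wmin, ⌊(n : ℝ) * (q - 1)⌋ + 1 ≤ ∑ i ∈ S, ⌊(n : ℝ) * w i⌋) ∧
    (∀ S ∈ Lmax, ∑ i ∈ S, ⌊(n : ℝ) * w i⌋ ≤ (⌊(n : ℝ) * (q - 1)⌋ + 1) - 1) := by
  refine ⟨fun S hS => ?_, fun S hS => ?_⟩
  · have hne : S.Nonempty := by
      rw [nonempty_iff_ne_empty]
      rintro rfl
      linarith [hWin ∅ hS, sum_empty (f := w)]
    have hcard : (#S : ℝ) ≤ n := by
      exact_mod_cast (card_le_univ S).trans (Fintype.card_fin n).le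
    exact floor_mul_sub_one_lt_sum_floor_mul hne hcard (hWin S hS)
  · rw [add_sub_cancel_right]
    exact sum_floor_mul_le_floor_mul_s14 (Nat.cast_nonneg n) (hLose S hS)

theorem stmt_14 {n : ℕ} (Wmin Lmax : Set (Finset (Fin n)))
    (w : Fin n → ℝ) (q : ℝ)
    (hq : 1 ≤ q) (hw : ∀ i, 1 ≤ w i)
    (hWin : ∀ S ∈ Wmin, q ≤ ∑ i ∈ S, w i)
    (hLose : ∀ S ∈ Lmax, ∑ i ∈ S, w i ≤ q - 1) :
    (∀ S ∈ Wmin, ⌊(n : ℝ) * (q - 1)⌋ + 1 ≤ ∑ i ∈ S, ⌊(n : ℝ) * w i⌋) ∧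
    (∀ S ∈ Lmax, ∑ i ∈ S, ⌊(n : ℝ) * w i⌋ ≤ (⌊(n : ℝ) * (q - 1)⌋ + 1) - 1) :=
  stmt_14_general Wmin Lmax w q hq hWin hLose
end

section
/- Let G = (N, W) be a simple game satisfying monotonicity. If there exist w ∈ ℝ^N and q ∈ ℝ with Σ_{i∈S} w_i ≥ q for all S ∈ W, Σ_{i∈S} w_i ≤ q for all S ∉ W, and Σ_{i∈N} w_i > 0, then G is roughly weighted: the modified weights w''_i = max{w_i, 0} together with q form a rough voting representation. -/
/-- `(q; w)` is a rough voting representation of the simple game `W`: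
`w` is nonnegative, `(q; w)` is not the zero vector, coalitions of weight
less than `q` are losing and coalitions of weight more than `q` are winning. -/
def IsRoughRep {n : ℕ} (W : Set (Finset (Fin n))) (q : ℝ) (w : Fin n → ℝ) : Prop :=
  (∀ i, 0 ≤ w i) ∧ (q ≠ 0 ∨ ∃ i, w i ≠ 0) ∧
  ∀ S : Finset (Fin n),
    ((∑ i ∈ S, w i) < q → S ∉ W) ∧ (q < ∑ i ∈ S, w i → S ∈ W)

/-- A simple game is roughly weighted if it has a rough voting representation. -/
def RoughlyWeighted {n : ℕ} (W : Set (Finset (Fin n))) : Prop :=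
  ∃ (q : ℝ) (w : Fin n → ℝ), IsRoughRep W q w

/-!
Clipping the negative weights can only raise the weight of a coalition, so a coalition lighter
than `q` under `max w 0` is lighter than `q` under `w` and hence losing. Conversely, the clipped
weight of `S` is the original weight of its subcoalition `T` of players with `w i ≥ 0`; if it
exceeds `q`, then `T` is winning, and so is `S ⊇ T` by monotonicity. Finally `∑ w > 0` forces
some `w i > 0`, so the clipped weight vector is nonzero.
-/

namespace Finset

variable {ι M : Type*} [AddCommMonoid M] [LinearOrder M] (s : Finset ι) (f : ι → M)

lemma sum_le_sum_max_zero [IsOrderedAddMonoid M] : ∑ i ∈ s, f i ≤ ∑ i ∈ s, max (f i) 0 :=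
  sum_le_sum fun _ _ => le_max_left _ _

lemma sum_filter_nonneg_eq_sum_max_zero : ∑ i ∈ s with 0 ≤ f i, f i = ∑ i ∈ s, max (f i) 0 := by
  rw [sum_filter]
  refine sum_congr rfl fun i _ => ?_
  split_ifs with h
  · exact (max_eq_left h).symm
  · exact (max_eq_right (not_le.1 h).le).symm

end Finset

open Finset

theorem stmt_17 {n : ℕ} (W : Set (Finset (Fin n)))
    (hmono : ∀ S S' : Finset (Fin n), S ∈ W → S ⊆ S' → S' ∈ W)
    (w : Fin n → ℝ) (q : ℝ)
    (hWin : ∀ S ∈ W, q ≤ ∑ i ∈ S, w i)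
    (hLose : ∀ S : Finset (Fin n), S ∉ W → ∑ i ∈ S, w i ≤ q)
    (hpos : 0 < ∑ i : Fin n, w i) :
    IsRoughRep W q (fun i => max (w i) 0) := by
  refine ⟨fun i => le_max_right _ _, ?_, fun S => ⟨fun hlt hS => ?_, fun hlt => ?_⟩⟩
  · obtain ⟨i, -, hi⟩ := exists_lt_of_sum_lt (f := fun _ => (0 : ℝ)) (by simpa using hpos)
    exact Or.inr ⟨i, (lt_max_of_lt_left hi).ne'⟩
  · linarith [hWin S hS, S.sum_le_sum_max_zero w]
  · have hT : S.filter (0 ≤ w ·) ∈ W := by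
      by_contra hT
      linarith [hLose _ hT, S.sum_filter_nonneg_eq_sum_max_zero w]
    exact hmono _ S hT (filter_subset _ _)
end

section
/- If a simple game G = (N, W) with ∅ ∉ W has a rough voting representation (q; w) with q = 0, then G has a passer, i.e., a player i° such that every coalition containing i° is winning; consequently G also has the integer rough representation with q = 0, w_{i°} = 1, and w_i = 0 for i ≠ i°. -/
namespace IsRoughRep

variable {n : ℕ} {W : Set (Finset (Fin n))} {w : Fin n → ℝ}

theorem exists_pos_of_quota_zero (h : IsRoughRep W 0 w) : ∃ i, 0 < w i := by
  obtain ⟨i, hi⟩ := h.2.1.resolve_left (not_not.mpr rfl)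
  exact ⟨i, (h.1 i).lt_of_ne' hi⟩

theorem mem_of_quota_zero (h : IsRoughRep W 0 w) {i : Fin n} (hi : 0 < w i)
    {S : Finset (Fin n)} (hS : i ∈ S) : S ∈ W :=
  (h.2.2 S).2 <| hi.trans_le <| Finset.single_le_sum (fun j _ => h.1 j) hS

end IsRoughRep

theorem isRoughRep_zero_of_passer {n : ℕ} {W : Set (Finset (Fin n))} {i₀ : Fin n}
    (hpass : ∀ S : Finset (Fin n), i₀ ∈ S → S ∈ W) :
    IsRoughRep W 0 (fun i => if i = i₀ then (1 : ℝ) else 0) := by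
  refine ⟨fun i => by positivity, Or.inr ⟨i₀, by simp⟩, fun S => ?_⟩
  simp only [Finset.sum_ite_eq']
  split_ifs with hS
  · exact ⟨by norm_num, fun _ => hpass S hS⟩
  · simp

theorem stmt_18_general {n : ℕ} (W : Set (Finset (Fin n)))
    (w : Fin n → ℝ) (hrep : IsRoughRep W 0 w) :
    ∃ i₀ : Fin n,
      (∀ S : Finset (Fin n), i₀ ∈ S → S ∈ W) ∧
      IsRoughRep W 0 (fun i => if i = i₀ then (1 : ℝ) else 0) := by
  obtain ⟨i₀, hi₀⟩ := hrep.exists_pos_of_quota_zero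
  have hpass : ∀ S : Finset (Fin n), i₀ ∈ S → S ∈ W := fun S hS =>
    hrep.mem_of_quota_zero hi₀ hS
  exact ⟨i₀, hpass, isRoughRep_zero_of_passer hpass⟩

theorem stmt_18 {n : ℕ} (W : Set (Finset (Fin n)))
    (hempty : (∅ : Finset (Fin n)) ∉ W)
    (w : Fin n → ℝ) (hrep : IsRoughRep W 0 w) :
    ∃ i₀ : Fin n,
      (∀ S : Finset (Fin n), i₀ ∈ S → S ∈ W) ∧
      IsRoughRep W 0 (fun i => if i = i₀ then (1 : ℝ) else 0) :=
  stmt_18_general W w hrep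
end

section
/- Let A be an m×k integer matrix and c an integer vector such that the system A z = c, z ≥ 0 has a real solution. Then it has a basic solution z' with basis matrix B (a square invertible submatrix of a row-reduced version of A) such that |det(B)|·z' is a nonnegative integer vector, with each nonzero component equal to ±det(B_i) for B_i obtained from B by replacing a column with the right-hand side. -/
/-!
Among the nonnegative solutions of `M z = b`, take one of minimal support. Its support columns
are linearly independent: a kernel vector supported there could be added to `z`, with the
largest step keeping `z` nonnegative, to kill one more coordinate. Some rows of these columns
then form an invertible square matrix `B`, and on the support `z` is the unique solution of the
square system, given by Cramer's rule. For integer data `det B * z` is therefore an integer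
vector, and as `z ≥ 0`, `|det B| * z = |det B * z|` is a nonnegative one.
-/

open Matrix Function

namespace Matrix

variable {R K m n o : Type*} [Fintype n]

/-- The columns of `M` on the support of `z` are linearly independent, i.e. `z` is basic. -/
def HasIndependentSupport [Semiring R] (M : Matrix m n R) (z : n → R) : Prop :=
  ∀ d, support d ⊆ support z → M *ᵥ d = 0 → d = 0

theorem submatrix_mulVec_comp_of_support_subset [NonUnitalNonAssocSemiring R] [Fintype o]
    {l : Type*} (M : Matrix m n R) (r : l → m) {c : o → n} (hc : Injective c) {z : n → R}
    (hz : support z ⊆ Set.range c) : M.submatrix r c *ᵥ (z ∘ c) = (M *ᵥ z) ∘ r := by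
  ext i
  refine Fintype.sum_of_injective c hc _ _ (fun j hj => ?_) fun _ => rfl
  rw [notMem_support.1 fun h => hj (hz h), mul_zero]

section Field

variable [Field K]

theorem HasIndependentSupport.linearIndependent_col_submatrix [Fintype o] {M : Matrix m n K}
    {z : n → K} (hz : M.HasIndependentSupport z) {c : o → n} (hc : Injective c)
    (hcz : Set.range c ⊆ support z) : LinearIndependent K (M.submatrix id c).col := by
  rw [← mulVec_injective_iff]
  refine (injective_iff_map_eq_zero (M.submatrix id c).mulVecLin).2 fun x hx => ?_
  have hd : support (extend c x (0 : n → K)) ⊆ Set.range c := fun j hj => by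
    by_contra hjc
    exact hj (extend_apply' x (0 : n → K) j (by simpa using hjc))
  have hMd : M *ᵥ extend c x (0 : n → K) = 0 := by
    rw [← comp_id (M *ᵥ _), ← submatrix_mulVec_comp_of_support_subset M id hc hd,
      extend_comp hc]
    exact hx
  rw [← extend_comp hc x 0, hz _ (hd.trans hcz) hMd]
  rfl

theorem exists_injective_det_submatrix_ne_zero [Fintype m] [DecidableEq n] {N : Matrix m n K}
    (hN : LinearIndependent K N.col) : ∃ r : n → m, Injective r ∧ (N.submatrix r id).det ≠ 0 := by
  have hrank : N.rank = Fintype.card n := by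
    rw [← rank_transpose]
    exact hN.rank_matrix
  have hspan : Submodule.span K (Set.range N.row) = ⊤ :=
    Submodule.eq_top_of_finrank_eq (by
      rw [← rank_eq_finrank_span_row, hrank, Module.finrank_fintype_fun_eq_card])
  obtain ⟨κ, a, ha, hspan_a, hli⟩ := exists_linearIndependent' K N.row
  let e : κ ≃ n :=
    (Module.Basis.mk hli (by rw [hspan_a, hspan])).indexEquiv (Pi.basisFun K n)
  refine ⟨a ∘ e.symm, ha.comp e.symm.injective, ?_⟩
  rw [← isUnit_iff_ne_zero, ← isUnit_iff_isUnit_det, ← linearIndependent_rows_iff_isUnit]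
  exact hli.comp e.symm e.symm.injective

theorem eq_det_updateCol_div_det [DecidableEq n] {B : Matrix n n K} (hB : B.det ≠ 0)
    {x b : n → K} (hx : B *ᵥ x = b) (l : n) : x l = (B.updateCol l b).det / B.det := by
  have hcramer : B.det • x = cramer B b :=
    mulVec_injective_iff_isUnit.2 ((isUnit_iff_isUnit_det B).2 hB.isUnit)
      (by rw [mulVec_smul, hx, mulVec_cramer])
  rw [eq_div_iff hB, ← cramer_apply, ← hcramer, Pi.smul_apply, smul_eq_mul, mul_comm]

theorem eq_det_updateCol_div_det_of_map_intCast [CharZero K] [DecidableEq n]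
    {B : Matrix n n ℤ} (hB : B.det ≠ 0) {x : n → K} {b : n → ℤ}
    (hx : B.map (Int.cast : ℤ → K) *ᵥ x = fun i => (b i : K)) (l : n) :
    x l = ((B.updateCol l b).det : K) / (B.det : K) := by
  rw [Int.cast_det, Int.cast_det, map_updateCol]
  exact eq_det_updateCol_div_det (by rwa [← Int.cast_det, Int.cast_ne_zero]) hx l

end Field

end Matrix

section LinearOrderedField

variable {K n : Type*} [Field K] [LinearOrder K] [IsStrictOrderedRing K] [Fintype n]

theorem exists_nonneg_add_smul_support_ssubset {z d : n → K} (hz : 0 ≤ z)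
    (hdz : support d ⊆ support z) (hneg : ∃ j, d j < 0) :
    ∃ t : K, 0 ≤ z + t • d ∧ support (z + t • d) ⊂ support z := by
  obtain ⟨j₀, hj₀, hmin⟩ := (Finset.univ.filter (d · < 0)).exists_min_image
    (fun j => z j / -d j) (by simpa [Finset.Nonempty] using hneg)
  simp only [Finset.mem_filter, Finset.mem_univ, true_and] at hj₀ hmin
  set t := z j₀ / -d j₀
  have ht : 0 ≤ t := div_nonneg (hz j₀) (neg_nonneg.2 hj₀.le)
  refine ⟨t, fun j => ?_, ?_⟩
  · simp only [Pi.add_apply, Pi.smul_apply, smul_eq_mul, Pi.zero_apply]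
    rcases lt_or_ge (d j) 0 with hj | hj
    · have := hmin j hj
      rw [le_div_iff₀ (neg_pos.2 hj)] at this
      linarith
    · linarith [mul_nonneg ht hj, show 0 ≤ z j from hz j]
  · have hsub : support (z + t • d) ⊆ support z :=
      (support_add _ _).trans
        (Set.union_subset le_rfl ((support_smul_subset_right _ _).trans hdz))
    have hzero : (z + t • d) j₀ = 0 := by
      simp only [Pi.add_apply, Pi.smul_apply, smul_eq_mul, t]
      field_simp [hj₀.ne]
      ring
    exact (Set.ssubset_iff_of_subset hsub).2 ⟨j₀, hdz hj₀.ne, by simpa using hzero⟩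

theorem Matrix.exists_nonneg_mulVec_eq_hasIndependentSupport {m : Type*} (M : Matrix m n K)
    {b : m → K} (h : ∃ z, 0 ≤ z ∧ M *ᵥ z = b) :
    ∃ z, 0 ≤ z ∧ M *ᵥ z = b ∧ M.HasIndependentSupport z := by
  obtain ⟨z, hz, hMz⟩ := h
  induction hs : (support z).ncard using Nat.strong_induction_on generalizing z with
  | _ s ih =>
  by_cases hind : M.HasIndependentSupport z
  · exact ⟨z, hz, hMz, hind⟩
  obtain ⟨d, hdz, hMd, hneg⟩ :
      ∃ d, support d ⊆ support z ∧ M *ᵥ d = 0 ∧ ∃ j, d j < 0 := by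
    simp only [HasIndependentSupport, not_forall] at hind
    obtain ⟨d, hdz, hMd, hd⟩ := hind
    obtain ⟨j, hj⟩ := ne_iff.1 hd
    rcases hj.lt_or_gt with hlt | hgt
    · exact ⟨d, hdz, hMd, j, hlt⟩
    · exact ⟨-d, by rwa [support_neg], by rw [mulVec_neg, hMd, neg_zero], j, by simpa using hgt⟩
  obtain ⟨t, hnn, hss⟩ := exists_nonneg_add_smul_support_ssubset hz hdz hneg
  exact ih _ (hs ▸ Set.ncard_lt_ncard hss) _ hnn
    (by rw [mulVec_add, mulVec_smul, hMz, hMd, smul_zero, add_zero]) rfl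

end LinearOrderedField

theorem stmt_19 {m k : ℕ} (A : Matrix (Fin m) (Fin k) ℤ) (c : Fin m → ℤ)
    (hfeas : ∃ z : Fin k → ℝ, (∀ i, 0 ≤ z i) ∧
      (A.map (Int.cast : ℤ → ℝ)).mulVec z = fun i => (c i : ℝ)) :
    ∃ (p : ℕ) (rowSel : Fin p → Fin m) (colSel : Fin p → Fin k),
      Function.Injective rowSel ∧ Function.Injective colSel ∧
      (A.submatrix rowSel colSel).det ≠ 0 ∧
      ∃ z' : Fin k → ℝ,
        (∀ i, 0 ≤ z' i) ∧
        ((A.map (Int.cast : ℤ → ℝ)).mulVec z' = fun i => (c i : ℝ)) ∧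
        (∀ j : Fin k, (∀ l : Fin p, colSel l ≠ j) → z' j = 0) ∧
        (∀ l : Fin p,
          z' (colSel l) =
            (((A.submatrix rowSel colSel).updateCol l
                (fun r => c (rowSel r))).det : ℝ) /
            ((A.submatrix rowSel colSel).det : ℝ)) ∧
        (∀ j : Fin k,
          ∃ zint : ℤ, 0 ≤ zint ∧
            (|(A.submatrix rowSel colSel).det| : ℝ) * z' j = (zint : ℝ)) := by
  set M : Matrix (Fin m) (Fin k) ℝ := A.map Int.cast
  obtain ⟨z, hz, hMz, hind⟩ := M.exists_nonneg_mulVec_eq_hasIndependentSupport hfeas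
  obtain ⟨p, colSel, hcol, hrange⟩ := (support z).toFinite.fin_param
  obtain ⟨rowSel, hrow, hdetR⟩ :=
    exists_injective_det_submatrix_ne_zero (hind.linearIndependent_col_submatrix hcol hrange.le)
  set B := A.submatrix rowSel colSel
  have hdet : B.det ≠ 0 := by
    rw [← Int.cast_ne_zero (α := ℝ), Int.cast_det]
    exact hdetR
  have hsys : B.map (Int.cast : ℤ → ℝ) *ᵥ (z ∘ colSel) = fun r => (c (rowSel r) : ℝ) := by
    have h := M.submatrix_mulVec_comp_of_support_subset rowSel hcol hrange.ge
    rwa [hMz] at h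
  have hcramer : ∀ l, z (colSel l) = _ := eq_det_updateCol_div_det_of_map_intCast hdet hsys
  have hoff : ∀ j ∉ Set.range colSel, z j = 0 := fun j hj => notMem_support.1 (hrange ▸ hj)
  refine ⟨p, rowSel, colSel, hrow, hcol, hdet, z, hz, hMz,
    fun j hj => hoff j fun ⟨l, hl⟩ => hj l hl, hcramer, fun j => ?_⟩
  obtain ⟨N, hN⟩ : ∃ N : ℤ, (B.det : ℝ) * z j = N := by
    by_cases hj : j ∈ Set.range colSel
    · obtain ⟨l, rfl⟩ := hj
      exact ⟨_, by rw [hcramer l, mul_div_cancel₀ _ (Int.cast_ne_zero.2 hdet)]⟩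
    · exact ⟨0, by rw [hoff j hj, mul_zero, Int.cast_zero]⟩
  exact ⟨|N|, abs_nonneg N, by rw [Int.cast_abs, ← hN, abs_mul, abs_of_nonneg (hz j)]⟩
end
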